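/- arXiv:0809.1473 — 4 statements merged into one kernel-verified Lean document; each statement's English description precedes it below -/
import Mathlib

section
/- Let d ≥ 1, let S be a finite set of points in ℝ^d, let k be an integer with 1 ≤ k ≤ |S|, and let σ : {1,…,k} → S be injective. Set p = Σ_{i=1}^k (k+1−i)·σ(i). Then the normal cone of the ordered k-set polytope P_k(S) at p equals the set of all c ∈ ℝ^d satisfying ⟨c,σ(1)⟩ ≥ ⟨c,σ(2)⟩ ≥ … ≥ ⟨c,σ(k)⟩ and ⟨c,σ(k)⟩ ≥ ⟨c,s⟩ for all s ∈ S not in the image of σ. -/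
open scoped RealInnerProductSpace Pointwise
open MeasureTheory

attribute [local instance] Classical.decEq

noncomputable section

abbrev E (d : ℕ) := EuclideanSpace ℝ (Fin d)

/-- The unordered k-set polytope `Q_k(S)`: convex hull of the points `∑_{s ∈ A} s`
where `A` ranges over k-element subsets of `S`. -/
def unorderedKSetPolytope (d k : ℕ) (S : Finset (E d)) : Set (E d) :=
  convexHull ℝ {p | ∃ A : Finset (E d), A ⊆ S ∧ A.card = k ∧ p = ∑ s ∈ A, s}

/-- The ordered k-set polytope `P_k(S)`: convex hull of the points
`∑_{i=1}^k (k+1-i) • σ(i)` (here `σ` is 0-indexed, so the weight of `σ i` is `k - i`)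
where `σ` ranges over injective maps from `{1,…,k}` into `S`. -/
def orderedKSetPolytope (d k : ℕ) (S : Finset (E d)) : Set (E d) :=
  convexHull ℝ {p | ∃ σ : Fin k → E d, Function.Injective σ ∧ (∀ i, σ i ∈ S) ∧
    p = ∑ i : Fin k, ((k - (i : ℕ) : ℕ) : ℝ) • σ i}

/-- The normal cone of a set `P` at a point `p`. -/
def normalCone {d : ℕ} (P : Set (E d)) (p : E d) : Set (E d) :=
  {c | ∀ x ∈ P, ⟪c, x⟫ ≤ ⟪c, p⟫}

/-!
A vertex `∑ᵢ (k - i) • τ i` of `P_k(S)` pairs with `c` to the ranked sum `∑ᵢ (k - i) ⟪c, τ i⟫`,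
so `c` lies in the normal cone at the vertex of `σ` iff `σ` maximises this ranked sum. Swapping two
entries of `σ`, or replacing its last entry by an unused point of `S`, shows that the ordering
conditions are necessary. Conversely, by Abel summation the ranked sum is the sum over `m` of the
prefix sums `∑_{i ≤ m} ⟪c, τ i⟫`, and under the ordering conditions each prefix sum of `σ` is the
largest possible sum of `⟪c, ·⟫` over `m + 1` points of `S`.
-/

open Finset Function

theorem normalCone_convexHull {d : ℕ} (V : Set (E d)) (p : E d) :
    normalCone (convexHull ℝ V) p = {c | ∀ v ∈ V, ⟪c, v⟫ ≤ ⟪c, p⟫} := by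
  ext c
  refine ⟨fun hc v hv => hc v (subset_convexHull ℝ V hv), fun hc x hx => ?_⟩
  exact convexHull_min hc (convex_halfSpace_le (innerₛₗ ℝ c).isLinear _) hx

theorem Finset.sum_le_sum_of_card_eq_of_sdiff_le {ι M : Type*} [DecidableEq ι] [AddCommMonoid M]
    [PartialOrder M] [IsOrderedAddMonoid M] {A B : Finset ι} (f : ι → M) (t : M)
    (hcard : #A = #B) (hA : ∀ x ∈ A \ B, f x ≤ t) (hB : ∀ x ∈ B \ A, t ≤ f x) :
    ∑ x ∈ A, f x ≤ ∑ x ∈ B, f x := by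
  have hsdiff : ∑ x ∈ A \ B, f x ≤ ∑ x ∈ B \ A, f x :=
    calc ∑ x ∈ A \ B, f x ≤ #(A \ B) • t := sum_le_card_nsmul _ _ _ hA
      _ = #(B \ A) • t := by rw [card_sdiff_comm hcard]
      _ ≤ ∑ x ∈ B \ A, f x := card_nsmul_le_sum _ _ _ hB
  calc ∑ x ∈ A, f x = ∑ x ∈ A ∩ B, f x + ∑ x ∈ A \ B, f x := (sum_inter_add_sum_sdiff _ _ _).symm
    _ ≤ ∑ x ∈ A ∩ B, f x + ∑ x ∈ B \ A, f x := by gcongr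
    _ = ∑ x ∈ B, f x := by rw [inter_comm, sum_inter_add_sum_sdiff]

section RankedSum

variable {α : Type*} {k : ℕ}

def rankedSum (f : α → ℝ) (τ : Fin k → α) : ℝ :=
  ∑ i : Fin k, ((k - (i : ℕ) : ℕ) : ℝ) * f (τ i)

theorem inner_sum_smul_eq_rankedSum {d : ℕ} (c : E d) (τ : Fin k → E d) :
    ⟪c, ∑ i : Fin k, ((k - (i : ℕ) : ℕ) : ℝ) • τ i⟫ = rankedSum (⟪c, ·⟫) τ := by
  simp only [inner_sum, real_inner_smul_right, rankedSum]

theorem rankedSum_eq_sum_prefixSum (f : α → ℝ) (τ : Fin k → α) :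
    rankedSum f τ = ∑ m : Fin k, ∑ i ∈ Iic m, f (τ i) := by
  calc rankedSum f τ = ∑ i : Fin k, ∑ _m ∈ Ici i, f (τ i) := by
        simp only [rankedSum, sum_const, Fin.card_Ici, nsmul_eq_mul]
    _ = ∑ m : Fin k, ∑ i ∈ Iic m, f (τ i) :=
        sum_comm' fun i m => by simp only [mem_univ, mem_Ici, mem_Iic, and_true, true_and]

theorem rankedSum_comp_swap (f : α → ℝ) (σ : Fin k → α) {i j : Fin k} (hij : i ≠ j) :
    rankedSum f (σ ∘ Equiv.swap i j) =
      rankedSum f σ - (((j : ℕ) : ℝ) - (i : ℕ)) * (f (σ i) - f (σ j)) := by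
  have hdiff : rankedSum f (σ ∘ Equiv.swap i j) - rankedSum f σ =
      ((k - i : ℕ) : ℝ) * (f (σ j) - f (σ i)) + ((k - j : ℕ) : ℝ) * (f (σ i) - f (σ j)) := by
    rw [rankedSum, rankedSum, ← sum_sub_distrib, Fintype.sum_eq_add i j hij]
    · simp only [comp_apply, Equiv.swap_apply_left, Equiv.swap_apply_right]
      ring
    · rintro x ⟨hxi, hxj⟩
      simp only [comp_apply, Equiv.swap_apply_of_ne_of_ne hxi hxj, sub_self]
  rw [Nat.cast_sub i.isLt.le, Nat.cast_sub j.isLt.le] at hdiff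
  linarith

theorem rankedSum_update (f : α → ℝ) (σ : Fin k → α) (L : Fin k) (s : α) :
    rankedSum f (update σ L s) = rankedSum f σ + ((k - L : ℕ) : ℝ) * (f s - f (σ L)) := by
  have hdiff : rankedSum f (update σ L s) - rankedSum f σ =
      ((k - L : ℕ) : ℝ) * (f s - f (σ L)) := by
    rw [rankedSum, rankedSum, ← sum_sub_distrib, Fintype.sum_eq_single L]
    · simp only [update_self]
      ring
    · intro x hx
      simp only [update_of_ne hx, sub_self]
  linarith

theorem Function.Injective.update_of_notMem_range {ι β : Type*} [DecidableEq ι] {g : ι → β}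
    (hg : Injective g) (a : ι) {b : β} (hb : b ∉ Set.range g) : Injective (update g a b) := by
  intro x y hxy
  by_cases hx : x = a <;> by_cases hy : y = a
  · exact hx.trans hy.symm
  · rw [hx, update_self, update_of_ne hy] at hxy
    exact absurd ⟨y, hxy.symm⟩ hb
  · rw [hy, update_self, update_of_ne hx] at hxy
    exact absurd ⟨x, hxy⟩ hb
  · rw [update_of_ne hx, update_of_ne hy] at hxy
    exact hg hxy

section Ordering

variable {f : α → ℝ} {S : Finset α} {σ : Fin k → α} {L : Fin k}

theorem apply_le_of_notMem_image_Iic [DecidableEq α] (hanti : Antitone (f ∘ σ)) (hL : IsTop L)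
    (hout : ∀ s ∈ S, s ∉ Set.range σ → f s ≤ f (σ L)) (m : Fin k) {s : α} (hs : s ∈ S)
    (hsm : s ∉ (Iic m).image σ) : f s ≤ f (σ m) := by
  by_cases hr : s ∈ Set.range σ
  · obtain ⟨j, rfl⟩ := hr
    exact hanti (le_of_not_ge fun hjm => hsm (mem_image_of_mem σ (mem_Iic.2 hjm)))
  · exact (hout s hs hr).trans (hanti (hL m))

theorem sum_Iic_le_sum_Iic_of_antitone (hσ : Injective σ) (hanti : Antitone (f ∘ σ))
    (hL : IsTop L) (hout : ∀ s ∈ S, s ∉ Set.range σ → f s ≤ f (σ L)) {τ : Fin k → α}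
    (hτ : Injective τ) (hτS : ∀ i, τ i ∈ S) (m : Fin k) :
    ∑ i ∈ Iic m, f (τ i) ≤ ∑ i ∈ Iic m, f (σ i) := by
  classical
  rw [← sum_image hτ.injOn, ← sum_image hσ.injOn]
  refine sum_le_sum_of_card_eq_of_sdiff_le f (f (σ m)) ?_ ?_ ?_
  · rw [card_image_of_injective _ hτ, card_image_of_injective _ hσ]
  · intro x hx
    obtain ⟨hxτ, hxσ⟩ := mem_sdiff.1 hx
    obtain ⟨i, -, rfl⟩ := mem_image.1 hxτ
    exact apply_le_of_notMem_image_Iic hanti hL hout m (hτS i) hxσ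
  · intro x hx
    obtain ⟨i, hi, rfl⟩ := mem_image.1 (mem_sdiff.1 hx).1
    exact hanti (mem_Iic.1 hi)

theorem rankedSum_le_of_antitone (hσ : Injective σ) (hanti : Antitone (f ∘ σ)) (hL : IsTop L)
    (hout : ∀ s ∈ S, s ∉ Set.range σ → f s ≤ f (σ L)) {τ : Fin k → α} (hτ : Injective τ)
    (hτS : ∀ i, τ i ∈ S) : rankedSum f τ ≤ rankedSum f σ := by
  rw [rankedSum_eq_sum_prefixSum, rankedSum_eq_sum_prefixSum]
  exact sum_le_sum fun m _ => sum_Iic_le_sum_Iic_of_antitone hσ hanti hL hout hτ hτS m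

variable (hσ : Injective σ) (hσS : ∀ i, σ i ∈ S)
  (hmax : ∀ τ : Fin k → α, Injective τ → (∀ i, τ i ∈ S) → rankedSum f τ ≤ rankedSum f σ)
include hσ hσS hmax

theorem antitone_of_forall_rankedSum_le : Antitone (f ∘ σ) := by
  intro i j hij
  rcases hij.eq_or_lt with rfl | hlt
  · rfl
  have h := hmax (σ ∘ Equiv.swap i j) (hσ.comp (Equiv.injective _)) fun x => hσS _
  rw [rankedSum_comp_swap f σ hlt.ne] at h
  have hji : (0 : ℝ) < (j : ℕ) - (i : ℕ) := sub_pos.2 (by exact_mod_cast hlt)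
  exact sub_nonneg.1 (nonneg_of_mul_nonneg_right (by linarith) hji : 0 ≤ f (σ i) - f (σ j))

theorem apply_le_of_forall_rankedSum_le (L : Fin k) {s : α} (hs : s ∈ S)
    (hsσ : s ∉ Set.range σ) : f s ≤ f (σ L) := by
  classical
  have hupdS : ∀ i, update σ L s i ∈ S := fun i => by
    rcases eq_or_ne i L with rfl | hi
    · rwa [update_self]
    · rw [update_of_ne hi]
      exact hσS i
  have h := hmax _ (hσ.update_of_notMem_range L hsσ) hupdS
  rw [rankedSum_update] at h
  have hw : (0 : ℝ) < (k - L : ℕ) := by exact_mod_cast Nat.sub_pos_of_lt L.isLt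
  exact sub_nonpos.1 (nonpos_of_mul_nonpos_right (by linarith) hw)

end Ordering

theorem forall_rankedSum_le_iff {f : α → ℝ} {S : Finset α} {σ : Fin k → α} {L : Fin k}
    (hσ : Injective σ) (hσS : ∀ i, σ i ∈ S) (hL : IsTop L) :
    (∀ τ : Fin k → α, Injective τ → (∀ i, τ i ∈ S) → rankedSum f τ ≤ rankedSum f σ) ↔
      Antitone (f ∘ σ) ∧ ∀ s ∈ S, s ∉ Set.range σ → f s ≤ f (σ L) :=
  ⟨fun hmax => ⟨antitone_of_forall_rankedSum_le hσ hσS hmax,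
      fun _ hs hsσ => apply_le_of_forall_rankedSum_le hσ hσS hmax L hs hsσ⟩,
    fun ⟨hanti, hout⟩ _ hτ hτS => rankedSum_le_of_antitone hσ hanti hL hout hτ hτS⟩

end RankedSum

/-- The normal cone of the ordered k-set polytope at `∑_i (k+1-i) • σ(i)` is the set of
vectors `c` with `⟨c,σ(1)⟩ ≥ … ≥ ⟨c,σ(k)⟩` and `⟨c,σ(k)⟩ ≥ ⟨c,s⟩` for `s ∈ S` outside
the image of `σ`. -/
theorem normalCone_orderedKSetPolytope
    (d : ℕ) (S : Finset (E d)) (k : ℕ) (hk1 : 1 ≤ k)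
    (σ : Fin k → E d) (hσinj : Function.Injective σ) (hσS : ∀ i, σ i ∈ S) :
    normalCone (orderedKSetPolytope d k S) (∑ i : Fin k, ((k - (i : ℕ) : ℕ) : ℝ) • σ i) =
      {c : E d | (∀ i j : Fin k, i ≤ j → ⟪c, σ j⟫ ≤ ⟪c, σ i⟫) ∧
        ∀ s ∈ S, s ∉ Set.range σ → ⟪c, s⟫ ≤ ⟪c, σ ⟨k - 1, by omega⟩⟫} := by
  ext c
  have hL : IsTop (⟨k - 1, by omega⟩ : Fin k) := fun i =>
    Fin.le_def.2 (Nat.le_sub_one_of_lt i.isLt)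
  rw [orderedKSetPolytope, normalCone_convexHull]
  refine Iff.trans ?_ (forall_rankedSum_le_iff (f := (⟪c, ·⟫)) hσinj hσS hL)
  simp only [Set.mem_ofPred_eq, forall_exists_index, and_imp, inner_sum_smul_eq_rankedSum]
  refine ⟨fun h τ hτ hτS => ?_, fun h v τ hτ hτS hv => ?_⟩
  · rw [← inner_sum_smul_eq_rankedSum]
    exact h _ τ hτ hτS rfl
  · rw [hv, inner_sum_smul_eq_rankedSum]
    exact h τ hτ hτS

end
end

section
/- Let d ≥ 1, let S be a finite set of points in ℝ^d, let k be an integer with 1 ≤ k ≤ |S|, and let A be a k-element subset of S. Then p = Σ_{s∈A} s is an extreme point of the unordered k-set polytope Q_k(S) if and only if there exists c ∈ ℝ^d with ⟨c,s⟩ > ⟨c,s'⟩ for every s ∈ A and every s' ∈ S \ A. -/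
open scoped RealInnerProductSpace Pointwise
open MeasureTheory

attribute [local instance] Classical.decEq

noncomputable section

/-!
If `V` is finite, a point `p ∈ V` is an extreme point of `conv V` exactly when it is not in the
convex hull of `V \ {p}`, i.e. (Hahn–Banach) when some `c` strictly prefers `p` to every other
point of `V`. For `V` the set of `k`-subset sums and `p = ∑ A`, the competitors
`∑ A - s + s'` obtained by swapping `s ∈ A` for `s' ∈ S \ A` force `⟪c, s'⟫ < ⟪c, s⟫`.
Conversely, if `c` separates `A` from `S \ A`, any other `k`-subset `B` loses to `A`: the sets
`B \ A` and `A \ B` have the same size and every element of the first is worse than every element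
of the second.
-/

section Convexity

variable {𝕜 V : Type*} [Field 𝕜] [LinearOrder 𝕜] [IsStrictOrderedRing 𝕜]
  [AddCommGroup V] [Module 𝕜 V]

theorem convex_insert_setOf_lt (l : V →ₗ[𝕜] 𝕜) (p : V) :
    Convex 𝕜 (insert p {x | l x < l p}) := by
  rw [convex_iff_openSegment_subset]
  have key : ∀ y, l y < l p → openSegment 𝕜 p y ⊆ insert p {x | l x < l p} := by
    rintro y hy _ ⟨a, b, ha, hb, hab, rfl⟩
    refine Or.inr ?_
    calc l (a • p + b • y) = a * l p + b * l y := by simp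
      _ < a * l p + b * l p := by gcongr
      _ = l p := by rw [← add_mul, hab, one_mul]
  rintro x (rfl | hx) y (rfl | hy)
  · rw [openSegment_same]; exact Set.singleton_subset_iff.2 (Set.mem_insert _ _)
  · exact key y hy
  · rw [openSegment_symm]; exact key x hx
  · exact ((convex_halfSpace_lt l.isLinear (l p)).openSegment_subset hx hy).trans
      (Set.subset_insert _ _)

theorem mem_extremePoints_convexHull_of_forall_lt {s : Set V} {p : V} (l : V →ₗ[𝕜] 𝕜)
    (hp : p ∈ s) (hl : ∀ x ∈ s, x ≠ p → l x < l p) :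
    p ∈ (convexHull 𝕜 s).extremePoints 𝕜 := by
  have hsub : convexHull 𝕜 s ⊆ insert p {x | l x < l p} :=
    convexHull_min (fun x hx => (eq_or_ne x p).imp id (hl x hx)) (convex_insert_setOf_lt l p)
  have hdiff : convexHull 𝕜 s \ {p} = convexHull 𝕜 s ∩ {x | l x < l p} := by
    ext x
    constructor
    · rintro ⟨hx, hxp⟩
      exact ⟨hx, (hsub hx).resolve_left hxp⟩
    · rintro ⟨hx, hlx⟩
      exact ⟨hx, fun h => lt_irrefl _ (Set.mem_singleton_iff.1 h ▸ hlx)⟩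
  rw [(convex_convexHull 𝕜 s).mem_extremePoints_iff_convex_sdiff, hdiff]
  exact ⟨subset_convexHull 𝕜 s hp,
    (convex_convexHull 𝕜 s).inter (convex_halfSpace_lt l.isLinear (l p))⟩

theorem notMem_convexHull_sdiff_of_mem_extremePoints {s : Set V} {p : V}
    (hp : p ∈ (convexHull 𝕜 s).extremePoints 𝕜) : p ∉ convexHull 𝕜 (s \ {p}) := by
  rw [(convex_convexHull 𝕜 s).mem_extremePoints_iff_mem_sdiff_convexHull_sdiff] at hp
  exact fun h => hp.2 (convexHull_mono (Set.sdiff_subset_sdiff_left (subset_convexHull 𝕜 s)) h)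

end Convexity

section InnerProductSpace

variable {F : Type*} [NormedAddCommGroup F] [InnerProductSpace ℝ F] [CompleteSpace F]

theorem exists_inner_lt_of_notMem_convexHull {s : Set F} {p : F} (hs : s.Finite)
    (hp : p ∉ convexHull ℝ s) : ∃ c : F, ∀ x ∈ s, ⟪c, x⟫ < ⟪c, p⟫ := by
  obtain ⟨f, u, hfu, huf⟩ := geometric_hahn_banach_closed_point (convex_convexHull ℝ s)
    (hs.isCompact_convexHull ℝ).isClosed hp
  refine ⟨(InnerProductSpace.toDual ℝ F).symm f, fun x hx => ?_⟩
  simp only [InnerProductSpace.toDual_symm_apply]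
  exact (hfu x (subset_convexHull ℝ s hx)).trans huf

theorem mem_extremePoints_convexHull_iff_exists_inner_lt {s : Set F} {p : F} (hs : s.Finite)
    (hp : p ∈ s) :
    p ∈ (convexHull ℝ s).extremePoints ℝ ↔ ∃ c : F, ∀ x ∈ s, x ≠ p → ⟪c, x⟫ < ⟪c, p⟫ := by
  constructor
  · intro h
    obtain ⟨c, hc⟩ := exists_inner_lt_of_notMem_convexHull (hs.sdiff (t := {p}))
      (notMem_convexHull_sdiff_of_mem_extremePoints h)
    exact ⟨c, fun x hx hxp => hc x ⟨hx, hxp⟩⟩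
  · rintro ⟨c, hc⟩
    exact mem_extremePoints_convexHull_of_forall_lt (innerₛₗ ℝ c) hp hc

end InnerProductSpace

namespace Finset

variable {α M : Type*} [DecidableEq α]

theorem sum_lt_sum_of_card_eq_of_forall_lt [AddCommMonoid M] [LinearOrder M]
    [IsOrderedCancelAddMonoid M] {f : α → M} {A B : Finset α} (hcard : B.card = A.card)
    (hne : B ≠ A) (hlt : ∀ a ∈ A, ∀ b ∈ B \ A, f b < f a) :
    ∑ b ∈ B, f b < ∑ a ∈ A, f a := by
  have hAB : (A \ B).Nonempty :=
    sdiff_nonempty.2 fun h => hne (eq_of_subset_of_card_le h hcard.le).symm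
  have hBA : (B \ A).Nonempty :=
    sdiff_nonempty.2 fun h => hne (eq_of_subset_of_card_le h hcard.ge)
  obtain ⟨a₀, ha₀, hmin⟩ := (A \ B).exists_min_image f hAB
  rw [← sum_sdiff_lt_sum_sdiff]
  calc ∑ b ∈ B \ A, f b < ∑ _b ∈ B \ A, f a₀ :=
        sum_lt_sum_of_nonempty hBA fun b hb => hlt a₀ (mem_sdiff.1 ha₀).1 b hb
    _ = (A \ B).card • f a₀ := by rw [sum_const, card_sdiff_comm hcard]
    _ ≤ ∑ a ∈ A \ B, f a := card_nsmul_le_sum _ _ _ hmin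

theorem sum_insert_erase_add [AddCommMonoid M] (f : α → M) {A : Finset α} {a b : α}
    (ha : a ∈ A) (hb : b ∉ A) :
    ∑ x ∈ insert b (A.erase a), f x + f a = ∑ x ∈ A, f x + f b := by
  rw [sum_insert fun h => hb (mem_of_mem_erase h), add_assoc, sum_erase_add A f ha, add_comm]

theorem card_insert_erase {A : Finset α} {a b : α} (ha : a ∈ A) (hb : b ∉ A) :
    (insert b (A.erase a)).card = A.card := by
  rw [card_insert_of_notMem fun h => hb (mem_of_mem_erase h), card_erase_add_one ha]

end Finset

def kSubsetSums {M : Type*} [AddCommMonoid M] (k : ℕ) (S : Finset M) : Set M :=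
  {p | ∃ A : Finset M, A ⊆ S ∧ A.card = k ∧ p = ∑ s ∈ A, s}

theorem finite_kSubsetSums {M : Type*} [AddCommMonoid M] (k : ℕ) (S : Finset M) :
    (kSubsetSums k S).Finite := by
  refine ((S.powersetCard k).finite_toSet.image fun A => ∑ s ∈ A, s).subset ?_
  rintro _ ⟨A, hAS, hA, rfl⟩
  exact ⟨A, Finset.mem_powersetCard.2 ⟨hAS, hA⟩, rfl⟩

theorem forall_mem_kSubsetSums_lt_iff {M N : Type*} [AddCancelCommMonoid M] [DecidableEq M]
    [AddCommMonoid N] [LinearOrder N] [IsOrderedCancelAddMonoid N] (f : M →+ N) {k : ℕ}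
    {S A : Finset M} (hAS : A ⊆ S) (hA : A.card = k) :
    (∀ x ∈ kSubsetSums k S, x ≠ ∑ s ∈ A, s → f x < f (∑ s ∈ A, s)) ↔
      ∀ s ∈ A, ∀ s' ∈ S \ A, f s' < f s := by
  constructor
  · intro h s hs s' hs'
    obtain ⟨hs'S, hs'A⟩ := Finset.mem_sdiff.1 hs'
    set B := insert s' (A.erase s)
    have hBS : B ⊆ S := Finset.insert_subset hs'S ((A.erase_subset s).trans hAS)
    have hsum : ∑ x ∈ B, x + s = ∑ x ∈ A, x + s' := Finset.sum_insert_erase_add id hs hs'A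
    have hne : ∑ x ∈ B, x ≠ ∑ x ∈ A, x := fun heq =>
      hs'A (add_left_cancel (heq ▸ hsum) ▸ hs)
    have hlt := h _ ⟨B, hBS, (Finset.card_insert_erase hs hs'A).trans hA, rfl⟩ hne
    have hf : f (∑ x ∈ B, x) + f s = f (∑ x ∈ A, x) + f s' := by rw [← map_add, ← map_add, hsum]
    have key : f (∑ x ∈ B, x) + f s' < f (∑ x ∈ B, x) + f s := by rw [hf]; gcongr
    exact lt_of_add_lt_add_left key
  · rintro h _ ⟨B, hBS, hB, rfl⟩ hne
    simp only [map_sum]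
    exact Finset.sum_lt_sum_of_card_eq_of_forall_lt (hB.trans hA.symm)
      (ne_of_apply_ne (fun B : Finset M => ∑ s ∈ B, s) hne)
      fun s hs s' hs' => h s hs s' (Finset.sdiff_subset_sdiff hBS le_rfl hs')

theorem extremePoint_iff_strict_separation_unordered_general
    (d : ℕ) (S : Finset (E d)) (k : ℕ)
    (A : Finset (E d)) (hAS : A ⊆ S) (hA : A.card = k) :
    (∑ s ∈ A, s) ∈ Set.extremePoints ℝ (unorderedKSetPolytope d k S) ↔
      ∃ c : E d, ∀ s ∈ A, ∀ s' ∈ S \ A, ⟪c, s'⟫ < ⟪c, s⟫ := by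
  change _ ∈ (convexHull ℝ (kSubsetSums k S)).extremePoints ℝ ↔ _
  rw [mem_extremePoints_convexHull_iff_exists_inner_lt (finite_kSubsetSums k S)
    ⟨A, hAS, hA, rfl⟩]
  exact exists_congr fun c => forall_mem_kSubsetSums_lt_iff (innerₛₗ ℝ c).toAddMonoidHom hAS hA

/-- `∑_{s ∈ A} s` is an extreme point of the unordered k-set polytope iff `A` is
strictly linearly separable from its complement in `S`. -/
theorem extremePoint_iff_strict_separation_unordered
    (d : ℕ) (hd : 1 ≤ d) (S : Finset (E d)) (k : ℕ) (hk1 : 1 ≤ k) (hk2 : k ≤ S.card)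
    (A : Finset (E d)) (hAS : A ⊆ S) (hA : A.card = k) :
    (∑ s ∈ A, s) ∈ Set.extremePoints ℝ (unorderedKSetPolytope d k S) ↔
      ∃ c : E d, ∀ s ∈ A, ∀ s' ∈ S \ A, ⟪c, s'⟫ < ⟪c, s⟫ :=
  extremePoint_iff_strict_separation_unordered_general d S k A hAS hA

end
end

section
/- Let d ≥ 1, let S be a finite set of N ≥ 1 points in ℝ^d, and let k be an integer with 1 ≤ k < N. Then the affine span of the ordered k-set polytope P_k(S) has the same dimension as the affine span of S; in particular dim P_k(S) = dim conv(S). -/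
open scoped RealInnerProductSpace Pointwise
open MeasureTheory

attribute [local instance] Classical.decEq

noncomputable section

/-! The vertex differences of `P_k(S)` span the same space as the differences of points of `S`.
One inclusion holds termwise. Conversely, for `s ≠ t` in `S`, the set `S` has `|S| - 2 ≥ k - 1`
points other than `s` and `t`, so some vertex has `s` in its first slot and avoids `t`;
replacing `s` by `t` there moves the vertex by `k • (s - t)`. -/

theorem Function.Injective.update_of_notMem_range_s8 {α β : Type*} [DecidableEq α] {f : α → β}
    (hf : Function.Injective f) (a : α) {b : β} (hb : b ∉ Set.range f) :
    Function.Injective (Function.update f a b) := by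
  intro x y h
  simp only [Function.update_apply] at h
  split_ifs at h with hx hy hy
  · exact hx.trans hy.symm
  · exact (hb ⟨y, h.symm⟩).elim
  · exact (hb ⟨x, h⟩).elim
  · exact hf h

theorem Finset.exists_injective_mem_apply_eq {α ι : Type*} [Fintype ι] {T : Finset α} {s : α}
    (hs : s ∈ T) (hcard : Fintype.card ι ≤ T.card) (j : ι) :
    ∃ σ : ι → α, Function.Injective σ ∧ (∀ i, σ i ∈ T) ∧ σ j = s := by
  obtain ⟨f⟩ := Function.Embedding.nonempty_of_card_le (β := T) (by simpa using hcard)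
  let g : ι → T := Equiv.swap (f j) ⟨s, hs⟩ ∘ f
  refine ⟨fun i => g i, Subtype.coe_injective.comp ((Equiv.injective _).comp f.injective),
    fun i => (g i).2, ?_⟩
  simp [g]

section WeightedVertices

variable {K V ι : Type*} [AddCommGroup V] [Fintype ι]

def weightedVertices [Ring K] [Module K V] (w : ι → K) (S : Finset V) : Set V :=
  {p | ∃ σ : ι → V, Function.Injective σ ∧ (∀ i, σ i ∈ S) ∧ p = ∑ i, w i • σ i}

theorem vectorSpan_weightedVertices_le [Ring K] [Module K V] (w : ι → K) (S : Finset V) :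
    vectorSpan K (weightedVertices w S) ≤ vectorSpan K (S : Set V) := by
  rw [vectorSpan_def, Submodule.span_le]
  rintro _ ⟨_, ⟨σ, -, hσ, rfl⟩, _, ⟨τ, -, hτ, rfl⟩, rfl⟩
  have hdiff : (∑ i, w i • σ i) -ᵥ ∑ i, w i • τ i = ∑ i, w i • (σ i -ᵥ τ i) := by
    simp only [vsub_eq_sub, smul_sub, Finset.sum_sub_distrib]
  change _ -ᵥ _ ∈ vectorSpan K (S : Set V)
  rw [hdiff]
  exact Submodule.sum_mem _ fun i _ => Submodule.smul_mem _ _ (vsub_mem_vectorSpan K (hσ i) (hτ i))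

theorem sub_mem_vectorSpan_weightedVertices [Field K] [Module K V] {w : ι → K} {S : Finset V}
    {j : ι} (hj : w j ≠ 0) (hcard : Fintype.card ι < S.card) {s t : V} (hs : s ∈ S) (ht : t ∈ S) :
    s - t ∈ vectorSpan K (weightedVertices w S) := by
  by_cases hst : s = t
  · simp [hst]
  obtain ⟨σ, hσ, hσS, hσj⟩ := Finset.exists_injective_mem_apply_eq
    (Finset.mem_erase.2 ⟨hst, hs⟩) (by rw [Finset.card_erase_of_mem ht]; omega) j
  have ht_notMem : t ∉ Set.range σ := by
    rintro ⟨i, hi⟩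
    exact Finset.notMem_erase t S (hi ▸ hσS i)
  let τ := Function.update σ j t
  have hτS : ∀ i, τ i ∈ S := by
    intro i
    by_cases hi : i = j
    · simpa [τ, hi] using ht
    · simpa [τ, hi] using Finset.mem_of_mem_erase (hσS i)
  have hdiff : (∑ i, w i • σ i) -ᵥ ∑ i, w i • τ i = w j • (s - t) := by
    rw [vsub_eq_sub, ← Finset.sum_sub_distrib, ← Fintype.sum_pi_single' j (w j • (s - t))]
    refine Finset.sum_congr rfl fun i _ => ?_
    by_cases hi : i = j
    · subst hi
      simp [τ, hσj, smul_sub]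
    · simp [τ, hi]
  have hσmem : ∑ i, w i • σ i ∈ weightedVertices w S :=
    ⟨σ, hσ, fun i => Finset.mem_of_mem_erase (hσS i), rfl⟩
  have hτmem : ∑ i, w i • τ i ∈ weightedVertices w S :=
    ⟨τ, hσ.update_of_notMem_range_s8 j ht_notMem, hτS, rfl⟩
  have hmem := vsub_mem_vectorSpan K hσmem hτmem
  rw [hdiff] at hmem
  simpa [hj] using Submodule.smul_mem _ (w j)⁻¹ hmem

theorem vectorSpan_weightedVertices [Field K] [Module K V] {w : ι → K} {S : Finset V} {j : ι}
    (hj : w j ≠ 0) (hcard : Fintype.card ι < S.card) :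
    vectorSpan K (weightedVertices w S) = vectorSpan K (S : Set V) := by
  refine le_antisymm (vectorSpan_weightedVertices_le w S) ?_
  rw [vectorSpan_def, Submodule.span_le]
  rintro _ ⟨s, hs, t, ht, rfl⟩
  exact sub_mem_vectorSpan_weightedVertices hj hcard hs ht

end WeightedVertices

theorem dim_orderedKSetPolytope_general
    (d : ℕ) (S : Finset (E d))
    (k : ℕ) (hk1 : 1 ≤ k) (hk2 : k < S.card) :
    Module.finrank ℝ (affineSpan ℝ (orderedKSetPolytope d k S)).direction =
      Module.finrank ℝ (affineSpan ℝ (convexHull ℝ (S : Set (E d)))).direction := by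
  have hspan : vectorSpan ℝ (weightedVertices (fun i : Fin k => ((k - (i : ℕ) : ℕ) : ℝ)) S) =
      vectorSpan ℝ (S : Set (E d)) :=
    vectorSpan_weightedVertices (j := ⟨0, hk1⟩) (Nat.cast_ne_zero.2 (by omega)) (by simpa using hk2)
  rw [orderedKSetPolytope, ← weightedVertices, affineSpan_convexHull, affineSpan_convexHull,
    direction_affineSpan, direction_affineSpan, hspan]

/-- For `1 ≤ k < |S|`, the ordered k-set polytope has the same dimension (dimension of
affine span) as `conv(S)`. -/
theorem dim_orderedKSetPolytope
    (d : ℕ) (hd : 1 ≤ d) (S : Finset (E d)) (hS : 1 ≤ S.card)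
    (k : ℕ) (hk1 : 1 ≤ k) (hk2 : k < S.card) :
    Module.finrank ℝ (affineSpan ℝ (orderedKSetPolytope d k S)).direction =
      Module.finrank ℝ (affineSpan ℝ (convexHull ℝ (S : Set (E d)))).direction :=
  dim_orderedKSetPolytope_general d S k hk1 hk2

end
end

section
/- Let d ≥ 1, let S be a finite set of points in ℝ^d, and let k be an integer with 1 ≤ k ≤ |S|. Then the ordered k-set polytope equals the Minkowski sum of the unordered j-set polytopes for j = 1, …, k: P_k(S) = Q_1(S) + Q_2(S) + … + Q_k(S), where + denotes Minkowski (elementwise) addition of subsets of ℝ^d. -/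
open scoped RealInnerProductSpace Pointwise
open MeasureTheory

attribute [local instance] Classical.decEq

noncomputable section

/-! Writing `σ 0, …, σ (k-1)` for the chosen points, the weighted vertex `∑ (k - i) • σ i` of
`P_k(S)` is the sum over `j` of the prefix sums `σ 0 + ⋯ + σ (j-1)`, each a vertex of `Q_j(S)`;
as convex hulls commute with Minkowski sums, `P_k(S) ⊆ ∑ Q_j(S)`. Conversely, a linear functional
`f` is maximised on `Q_j(S)` by the `j` points of `S` with the largest values of `f`, so listing
`S` by decreasing `f` gives a single vertex of `P_k(S)` maximising `f` on all of `∑ Q_j(S)`;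
hence no hyperplane separates a point of `∑ Q_j(S)` from `P_k(S)`. -/

open Finset

section Combinatorics

variable {α M β : Type*}

def prefixSum [AddCommMonoid M] {k : ℕ} (σ : Fin k → M) (j : ℕ) : M :=
  ∑ i ∈ ({i | (i : ℕ) < j} : Finset (Fin k)), σ i

def subsetSums [AddCommMonoid α] (j : ℕ) (S : Finset α) : Set α :=
  {p | ∃ A : Finset α, A ⊆ S ∧ A.card = j ∧ p = ∑ s ∈ A, s}

theorem sum_Icc_prefixSum [AddCommMonoid M] {k : ℕ} (σ : Fin k → M) :
    ∑ j ∈ Icc 1 k, prefixSum σ j = ∑ i : Fin k, (k - i : ℕ) • σ i := by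
  simp_rw [prefixSum, sum_filter]
  rw [sum_comm]
  refine sum_congr rfl fun i _ => ?_
  rw [← sum_filter, sum_const]
  congr 1
  have : {j ∈ Icc 1 k | (i : ℕ) < j} = Ioc (i : ℕ) k := by
    ext j; simp only [mem_filter, mem_Icc, mem_Ioc]; omega
  rw [this, Nat.card_Ioc]

theorem prefixSum_mem_subsetSums [AddCommMonoid α] {k j : ℕ} {S : Finset α} {σ : Fin k → α}
    (hσ : Function.Injective σ) (hσS : ∀ i, σ i ∈ S) (hj : j ≤ k) :
    prefixSum σ j ∈ subsetSums j S := by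
  refine ⟨image σ ({i | (i : ℕ) < j} : Finset (Fin k)), ?_, ?_, ?_⟩
  · exact image_subset_iff.2 fun i _ => hσS i
  · rw [card_image_of_injective _ hσ, Fin.card_filter_val_lt, min_eq_right hj]
  · rw [prefixSum, sum_image fun _ _ _ _ h => hσ h]

theorem sum_le_sum_of_card_eq_of_forall_sdiff_le [AddCommMonoid β] [LinearOrder β]
    [IsOrderedCancelAddMonoid β] {A B : Finset α} (f : α → β) (hcard : A.card = B.card)
    (h : ∀ a ∈ A \ B, ∀ b ∈ B \ A, f a ≤ f b) : ∑ a ∈ A, f a ≤ ∑ b ∈ B, f b := by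
  rw [← sum_sdiff_le_sum_sdiff]
  have hsdiff : (A \ B).card = (B \ A).card := card_sdiff_comm hcard
  rcases (B \ A).eq_empty_or_nonempty with hBA | hBA
  · rw [hBA, card_empty, card_eq_zero] at hsdiff
    rw [hBA, hsdiff]
  obtain ⟨b, hb, hmin⟩ := exists_min_image (B \ A) f hBA
  calc ∑ a ∈ A \ B, f a ≤ (A \ B).card • f b := sum_le_card_nsmul _ _ _ fun a ha => h a ha b hb
    _ = (B \ A).card • f b := by rw [hsdiff]
    _ ≤ ∑ b ∈ B \ A, f b := card_nsmul_le_sum _ _ _ hmin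

theorem Finset.exists_equivFin_antitone [LinearOrder β] (S : Finset α) (f : α → β) :
    ∃ e : Fin S.card ≃ S, Antitone fun i => f (e i) := by
  let e₀ := S.equivFin.symm
  let g : Fin S.card → βᵒᵈ := fun i => OrderDual.toDual (f (e₀ i))
  exact ⟨(Tuple.sort g).trans e₀, monotone_toDual_comp_iff.1 (Tuple.monotone_sort g)⟩

theorem exists_injective_sum_le_prefixSum [AddCommMonoid β] [LinearOrder β]
    [IsOrderedCancelAddMonoid β] {k : ℕ} (S : Finset α) (f : α → β) (hk : k ≤ S.card) :
    ∃ σ : Fin k → α, Function.Injective σ ∧ (∀ i, σ i ∈ S) ∧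
      ∀ j ≤ k, ∀ A ⊆ S, A.card = j → ∑ a ∈ A, f a ≤ prefixSum (fun i => f (σ i)) j := by
  obtain ⟨e, he⟩ := S.exists_equivFin_antitone f
  set σ : Fin k → α := fun i => e (Fin.castLE hk i)
  have hσ : Function.Injective σ :=
    Subtype.val_injective.comp (e.injective.comp (Fin.castLE_injective hk))
  refine ⟨σ, hσ, fun i => (e _).2, fun j hj A hAS hA => ?_⟩
  set B := image σ ({i | (i : ℕ) < j} : Finset (Fin k))
  have hB : prefixSum (fun i => f (σ i)) j = ∑ b ∈ B, f b := by
    rw [prefixSum, sum_image fun _ _ _ _ h => hσ h]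
  rw [hB]
  refine sum_le_sum_of_card_eq_of_forall_sdiff_le f ?_ fun a ha b hb => ?_
  · rw [hA, card_image_of_injective _ hσ, Fin.card_filter_val_lt, min_eq_right hj]
  obtain ⟨haA, haB⟩ := mem_sdiff.1 ha
  obtain ⟨i, hi, rfl⟩ := mem_image.1 (mem_sdiff.1 hb).1
  set m := e.symm ⟨a, hAS haA⟩
  have ham : a = e m := by simp [m]
  -- `a ∉ B`, so `a` comes after the first `j` points in the decreasing enumeration
  have hjm : j ≤ m := by
    by_contra! hmj
    refine haB (mem_image.2 ⟨⟨m, by omega⟩, by simpa using hmj, ?_⟩)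
    simp [σ, ham]
  rw [ham]
  exact he (show (Fin.castLE hk i : ℕ) ≤ m by simp at hi ⊢; omega)

end Combinatorics

section Polytopes

variable {d : ℕ}

def orderedKSetVertices (d k : ℕ) (S : Finset (E d)) : Set (E d) :=
  {p | ∃ σ : Fin k → E d, Function.Injective σ ∧ (∀ i, σ i ∈ S) ∧
    p = ∑ i : Fin k, ((k - (i : ℕ) : ℕ) : ℝ) • σ i}

theorem orderedKSetPolytope_eq_convexHull (k : ℕ) (S : Finset (E d)) :
    orderedKSetPolytope d k S = convexHull ℝ (orderedKSetVertices d k S) := rfl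

theorem unorderedKSetPolytope_eq_convexHull (j : ℕ) (S : Finset (E d)) :
    unorderedKSetPolytope d j S = convexHull ℝ (subsetSums j S) := rfl

theorem sum_natSub_smul_eq_sum_prefixSum {V : Type*} [AddCommGroup V] [Module ℝ V] {k : ℕ}
    (σ : Fin k → V) :
    ∑ i : Fin k, ((k - (i : ℕ) : ℕ) : ℝ) • σ i = ∑ j ∈ Icc 1 k, prefixSum σ j := by
  simp_rw [Nat.cast_smul_eq_nsmul]
  exact (sum_Icc_prefixSum σ).symm

theorem isClosed_orderedKSetPolytope (k : ℕ) (S : Finset (E d)) :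
    IsClosed (orderedKSetPolytope d k S) := by
  have hfinite : (orderedKSetVertices d k S).Finite := by
    refine (Set.finite_range fun σ : Fin k → S =>
      ∑ i : Fin k, ((k - (i : ℕ) : ℕ) : ℝ) • (σ i : E d)).subset ?_
    rintro _ ⟨σ, -, hσS, rfl⟩
    exact ⟨fun i => ⟨σ i, hσS i⟩, rfl⟩
  rw [orderedKSetPolytope_eq_convexHull]
  exact hfinite.isClosed_convexHull (𝕜 := ℝ)

theorem le_of_mem_unorderedKSetPolytope (f : StrongDual ℝ (E d)) {j : ℕ} {S : Finset (E d)}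
    {c : ℝ} (hc : ∀ A ⊆ S, A.card = j → ∑ a ∈ A, f a ≤ c) {x : E d}
    (hx : x ∈ unorderedKSetPolytope d j S) : f x ≤ c := by
  refine convexHull_min ?_ (convex_halfSpace_le f.toLinearMap.isLinear c) hx
  rintro _ ⟨A, hAS, hA, rfl⟩
  rw [Set.mem_ofPred_eq, map_sum]
  exact hc A hAS hA

theorem orderedKSetPolytope_subset_sum (k : ℕ) (S : Finset (E d)) :
    orderedKSetPolytope d k S ⊆ ∑ j ∈ Icc 1 k, unorderedKSetPolytope d j S := by
  simp_rw [unorderedKSetPolytope_eq_convexHull, ← convexHull_sum]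
  refine convexHull_mono ?_
  rintro _ ⟨σ, hσ, hσS, rfl⟩
  rw [sum_natSub_smul_eq_sum_prefixSum]
  exact Set.finsetSum_mem_finsetSum _ _ _ fun j hj =>
    prefixSum_mem_subsetSums hσ hσS (mem_Icc.1 hj).2

theorem sum_subset_orderedKSetPolytope {k : ℕ} {S : Finset (E d)} (hk : k ≤ S.card) :
    ∑ j ∈ Icc 1 k, unorderedKSetPolytope d j S ⊆ orderedKSetPolytope d k S := by
  intro x hx
  by_contra hxP
  obtain ⟨f, u, hfP, hfx⟩ := geometric_hahn_banach_closed_point (convex_convexHull ℝ _)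
    (isClosed_orderedKSetPolytope k S) hxP
  obtain ⟨σ, hσ, hσS, hgreedy⟩ := exists_injective_sum_le_prefixSum S f hk
  have hvertex : ∑ j ∈ Icc 1 k, prefixSum σ j ∈ orderedKSetPolytope d k S :=
    subset_convexHull ℝ _ ⟨σ, hσ, hσS, (sum_natSub_smul_eq_sum_prefixSum σ).symm⟩
  obtain ⟨g, hg, rfl⟩ := (Set.mem_finsetSum _ _ _).1 hx
  have hle : f (∑ j ∈ Icc 1 k, g j) ≤ f (∑ j ∈ Icc 1 k, prefixSum σ j) := by
    simp only [map_sum]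
    refine sum_le_sum fun j hj => le_of_mem_unorderedKSetPolytope f ?_ (hg hj)
    simpa only [prefixSum, map_sum] using hgreedy j (mem_Icc.1 hj).2
  linarith [hfP _ hvertex]

end Polytopes

theorem orderedKSetPolytope_eq_minkowski_sum_general
    (d : ℕ) (S : Finset (E d)) (k : ℕ) (hk2 : k ≤ S.card) :
    orderedKSetPolytope d k S = ∑ j ∈ Finset.Icc 1 k, unorderedKSetPolytope d j S :=
  (orderedKSetPolytope_subset_sum k S).antisymm (sum_subset_orderedKSetPolytope hk2)

/-- The ordered k-set polytope is the Minkowski sum of the unordered j-set polytopes,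
`P_k(S) = Q_1(S) + Q_2(S) + … + Q_k(S)`. -/
theorem orderedKSetPolytope_eq_minkowski_sum
    (d : ℕ) (hd : 1 ≤ d) (S : Finset (E d)) (k : ℕ) (hk1 : 1 ≤ k) (hk2 : k ≤ S.card) :
    orderedKSetPolytope d k S = ∑ j ∈ Finset.Icc 1 k, unorderedKSetPolytope d j S :=
  orderedKSetPolytope_eq_minkowski_sum_general d S k hk2

end
end
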